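/- Let f : ℝ → ℝ be a probability density function (f ≥ 0, measurable, ∫_ℝ f = 1) with f(x) ≤ M for all x ∈ ℝ, and let r > 0 and Δ > 0. Then ∫_{−∞}^{+∞} Φ(−|ε|/r)² f(ε) dε ≤ Φ(−Δ)² + 2 M r Δ, where Φ is the standard normal cumulative distribution function. -/

import Mathlib

open MeasureTheory Real

/-- The standard normal cumulative distribution function
`Φ(x) = ∫_{-∞}^x (1/√(2π)) e^{-s²/2} ds`. -/
noncomputable def stdNormalCDF (x : ℝ) : ℝ :=
  ∫ s in Set.Iic x, (Real.sqrt (2 * Real.pi))⁻¹ * Real.exp (-s ^ 2 / 2)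

/-!
Split the integral at `|ε| = r Δ`. Outside, monotonicity of `Φ` gives
`Φ(-|ε|/r)² ≤ Φ(-Δ)²`, and `f` has mass at most one there. Inside, the integrand is at most
`f ≤ M` (as `0 ≤ Φ ≤ 1`) on an interval of length `2 r Δ`.
-/

open ProbabilityTheory Set

lemma stdNormalCDF_eq_cdf_gaussianReal (x : ℝ) :
    stdNormalCDF x = cdf (gaussianReal 0 1) x := by
  rw [cdf_eq_real, measureReal_def, gaussianReal_apply_eq_integral _ one_ne_zero,
    ENNReal.toReal_ofReal (setIntegral_nonneg measurableSet_Iic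
      fun s _ ↦ gaussianPDFReal_nonneg 0 1 s)]
  simp [stdNormalCDF, gaussianPDFReal]

lemma monotone_stdNormalCDF : Monotone stdNormalCDF := by
  simpa only [funext stdNormalCDF_eq_cdf_gaussianReal] using monotone_cdf _

lemma stdNormalCDF_nonneg (x : ℝ) : 0 ≤ stdNormalCDF x :=
  stdNormalCDF_eq_cdf_gaussianReal x ▸ cdf_nonneg _ x

lemma stdNormalCDF_le_one (x : ℝ) : stdNormalCDF x ≤ 1 :=
  stdNormalCDF_eq_cdf_gaussianReal x ▸ cdf_le_one _ x

lemma integral_mul_le_of_le_of_lt_abs {f g : ℝ → ℝ} {M a c : ℝ}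
    (hf_nonneg : ∀ x, 0 ≤ f x) (hf_int : ∫ x, f x = 1) (hf_bound : ∀ x, f x ≤ M)
    (hg_meas : AEStronglyMeasurable g) (hg_nonneg : ∀ x, 0 ≤ g x) (hg_le_one : ∀ x, g x ≤ 1)
    (ha : 0 ≤ a) (hg_le : ∀ x, a < |x| → g x ≤ c) :
    ∫ x, g x * f x ≤ c + 2 * M * a := by
  have hf : Integrable f := .of_integral_ne_zero (by simp [hf_int])
  have hgf : Integrable fun x ↦ g x * f x :=
    hf.bdd_mul hg_meas (.of_forall fun x ↦ by
      rw [norm_of_nonneg (hg_nonneg x)]; exact hg_le_one x)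
  have hgf_le_f (x : ℝ) : g x * f x ≤ f x :=
    mul_le_of_le_one_left (hf_nonneg x) (hg_le_one x)
  have hc : 0 ≤ c := (hg_nonneg _).trans (hg_le (a + 1) (by rw [abs_of_nonneg] <;> linarith))
  have h_inside : ∫ x in Icc (-a) a, g x * f x ≤ 2 * M * a :=
    calc ∫ x in Icc (-a) a, g x * f x
        ≤ ‖∫ x in Icc (-a) a, g x * f x‖ := Real.le_norm_self _
      _ ≤ M * volume.real (Icc (-a) a) :=
          norm_setIntegral_le_of_norm_le_const measure_Icc_lt_top fun x _ ↦ by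
            rw [norm_of_nonneg (mul_nonneg (hg_nonneg x) (hf_nonneg x))]
            exact (hgf_le_f x).trans (hf_bound x)
      _ = 2 * M * a := by rw [Real.volume_real_Icc_of_le (by linarith)]; ring
  have h_outside : ∫ x in (Icc (-a) a)ᶜ, g x * f x ≤ c :=
    calc ∫ x in (Icc (-a) a)ᶜ, g x * f x
        ≤ ∫ x in (Icc (-a) a)ᶜ, c * f x :=
          setIntegral_mono_on hgf.integrableOn (hf.const_mul c).integrableOn
            measurableSet_Icc.compl fun x hx ↦ mul_le_mul_of_nonneg_right
              (hg_le x (not_le.1 fun h ↦ hx (abs_le.1 h))) (hf_nonneg x)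
      _ = c * ∫ x in (Icc (-a) a)ᶜ, f x := integral_const_mul c f
      _ ≤ c * ∫ x, f x :=
          mul_le_mul_of_nonneg_left (setIntegral_le_integral hf (.of_forall hf_nonneg)) hc
      _ = c := by rw [hf_int, mul_one]
  rw [← integral_add_compl measurableSet_Icc hgf]
  linarith

theorem integral_sq_smoothed_score_diff_le_general {f : ℝ → ℝ} {M r Δ : ℝ}
    (hf_nonneg : ∀ x, 0 ≤ f x)
    (hf_int : ∫ x : ℝ, f x = 1) (hf_bound : ∀ x, f x ≤ M)
    (hr : 0 < r) (hΔ : 0 < Δ) :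
    ∫ ε : ℝ, stdNormalCDF (-|ε| / r) ^ 2 * f ε ≤
      stdNormalCDF (-Δ) ^ 2 + 2 * M * r * Δ := by
  have hΦ_meas : Measurable fun ε : ℝ ↦ stdNormalCDF (-|ε| / r) ^ 2 :=
    (monotone_stdNormalCDF.measurable.comp (measurable_abs.neg.div_const r)).pow_const 2
  rw [mul_assoc (2 * M) r Δ]
  refine integral_mul_le_of_le_of_lt_abs hf_nonneg hf_int hf_bound
    hΦ_meas.aestronglyMeasurable (fun ε ↦ sq_nonneg _)
    (fun ε ↦ pow_le_one₀ (stdNormalCDF_nonneg _) (stdNormalCDF_le_one _))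
    (by positivity) fun ε hε ↦ ?_
  refine pow_le_pow_left₀ (stdNormalCDF_nonneg _) (monotone_stdNormalCDF ?_) 2
  rw [div_le_iff₀ hr]
  linarith

/-- If `f` is a measurable probability density bounded by `M`, and `r > 0`,
`Δ > 0`, then `∫ Φ(-|ε|/r)² f(ε) dε ≤ Φ(-Δ)² + 2 M r Δ`. -/
theorem integral_sq_smoothed_score_diff_le {f : ℝ → ℝ} {M r Δ : ℝ}
    (hf_nonneg : ∀ x, 0 ≤ f x) (hf_meas : Measurable f)
    (hf_int : ∫ x : ℝ, f x = 1) (hf_bound : ∀ x, f x ≤ M)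
    (hr : 0 < r) (hΔ : 0 < Δ) :
    ∫ ε : ℝ, stdNormalCDF (-|ε| / r) ^ 2 * f ε ≤
      stdNormalCDF (-Δ) ^ 2 + 2 * M * r * Δ :=
  integral_sq_smoothed_score_diff_le_general hf_nonneg hf_int hf_bound hr hΔ
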